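/- Let n ≥ 2 and 1 ≤ k ≤ n−1, and consider the block upper triangular system ẋ(t) = B(t)x(t) with B(t) = [[B₁₁(t), B₁₂(t)], [0, B₂₂(t)]], where B₁₁, B₁₂, B₂₂ are continuous and uniformly bounded matrices of sizes (n−k)×(n−k), (n−k)×k and k×k. Assume the subsystem ẋ₁ = B₁₁(t)x₁ admits an exponential dichotomy with projection P₁ = 0 and the subsystem ẋ₂ = B₂₂(t)x₂ admits an exponential dichotomy with projection P₂ = I_k. Then the full system ẋ = B(t)x admits an exponential dichotomy with projection P = diag(0_{(n−k)×(n−k)}, I_k). -/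

import Mathlib

noncomputable section

open Matrix Set

/-- Euclidean (spectral / 2-norm) operator norm of a real matrix. -/
noncomputable def mnorm {m n : Type*} [Fintype m] [Fintype n] [DecidableEq n]
    (M : Matrix m n ℝ) : ℝ :=
  ‖LinearMap.toContinuousLinearMap (Matrix.toEuclideanLin M)‖

/-- Euclidean 2-norm of a vector. -/
noncomputable def vnorm {n : Type*} [Fintype n] (v : n → ℝ) : ℝ :=
  Real.sqrt (∑ i, (v i) ^ 2)

/-- A matrix-valued function is uniformly bounded on `J = [0, ∞)`. -/
def UnifBdd {m n : Type*} [Fintype m] [Fintype n] [DecidableEq n]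
    (A : ℝ → Matrix m n ℝ) : Prop :=
  ∃ a : ℝ, ∀ t ∈ Ici (0 : ℝ), mnorm (A t) ≤ a

/-- A matrix-valued function is continuous on `J = [0, ∞)` (entrywise). -/
def ContinuousOnJ {m n : Type*} (A : ℝ → Matrix m n ℝ) : Prop :=
  ∀ i j, ContinuousOn (fun t => A t i j) (Ici (0 : ℝ))

/-- `X` is a fundamental matrix solution of `ẋ = A(t) x` on `J = [0, ∞)`. -/
def IsFundamentalSolution {n : Type*} [Fintype n] [DecidableEq n]
    (A X : ℝ → Matrix n n ℝ) : Prop :=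
  (∀ t ∈ Ici (0 : ℝ), IsUnit (X t)) ∧
  ∀ t ∈ Ici (0 : ℝ), ∀ i j,
    HasDerivWithinAt (fun s => X s i j) ((A t * X t) i j) (Ici (0 : ℝ)) t

/-- `Φ` is the state transition matrix of `ẋ = A(t) x` on `J = [0, ∞)`:
`∂Φ(t,t₀)/∂t = A(t) Φ(t,t₀)`, `Φ(t₀,t₀) = I`. -/
def IsStateTransition {n : Type*} [Fintype n] [DecidableEq n]
    (A : ℝ → Matrix n n ℝ) (Φ : ℝ → ℝ → Matrix n n ℝ) : Prop :=
  (∀ t₀ ∈ Ici (0 : ℝ), Φ t₀ t₀ = 1) ∧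
  ∀ t₀ ∈ Ici (0 : ℝ), ∀ t ∈ Ici (0 : ℝ), ∀ i j,
    HasDerivWithinAt (fun s => Φ s t₀ i j) ((A t * Φ t t₀) i j) (Ici (0 : ℝ)) t

/-- The system `ẋ = F(t) x` is uniformly exponentially stable. -/
def SysUES {n : Type*} [Fintype n] [DecidableEq n] (F : ℝ → Matrix n n ℝ) : Prop :=
  ∃ K : ℝ, 1 ≤ K ∧ ∃ μ : ℝ, 0 < μ ∧
    ∀ Φ : ℝ → ℝ → Matrix n n ℝ, IsStateTransition F Φ →
      ∀ t₀ ∈ Ici (0 : ℝ), ∀ t, t₀ ≤ t →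
        mnorm (Φ t t₀) ≤ K * Real.exp (-μ * (t - t₀))

/-- The pair `(A(t), C(t))` is uniformly exponentially detectable. -/
def UnifDetectable {n p : Type*} [Fintype n] [DecidableEq n] [Fintype p] [DecidableEq p]
    (A : ℝ → Matrix n n ℝ) (C : ℝ → Matrix p n ℝ) : Prop :=
  ∃ L : ℝ → Matrix n p ℝ, ContinuousOnJ L ∧ UnifBdd L ∧
    SysUES (fun t => A t - L t * C t)

/-- Observability Gramian `M(t₁, t₀) = ∫_{t₀}^{t₁} Φ(s,t₀)ᵀ C(s)ᵀ C(s) Φ(s,t₀) ds`. -/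
noncomputable def gramian {n p : Type*} [Fintype n] [Fintype p]
    (C : ℝ → Matrix p n ℝ) (Φ : ℝ → ℝ → Matrix n n ℝ) (t₀ t₁ : ℝ) :
    Matrix n n ℝ :=
  Matrix.of fun i j => ∫ s in t₀..t₁, ((Φ s t₀)ᵀ * (C s)ᵀ * C s * Φ s t₀) i j

/-- The pair `(A(t), C(t))` is uniformly completely observable:
`β₁ I ⪯ M(t₀+σ, t₀) ⪯ β₂ I` for all `t₀ ∈ J`. -/
def UCO {n p : Type*} [Fintype n] [DecidableEq n] [Fintype p]
    (A : ℝ → Matrix n n ℝ) (C : ℝ → Matrix p n ℝ) : Prop :=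
  ∃ σ : ℝ, 0 < σ ∧ ∃ β₁ : ℝ, 0 < β₁ ∧ ∃ β₂ : ℝ, 0 < β₂ ∧
    ∀ Φ : ℝ → ℝ → Matrix n n ℝ, IsStateTransition A Φ →
      ∀ t₀ ∈ Ici (0 : ℝ),
        (gramian C Φ t₀ (t₀ + σ) - β₁ • (1 : Matrix n n ℝ)).PosSemidef ∧
        (β₂ • (1 : Matrix n n ℝ) - gramian C Φ t₀ (t₀ + σ)).PosSemidef

/-- Exponential dichotomy estimates for the fundamental solution `X` with
projection `P` and constants `K ≥ 1`, `α > 0`. -/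
def ExpDichotomyWith {n : Type*} [Fintype n] [DecidableEq n]
    (X : ℝ → Matrix n n ℝ) (P : Matrix n n ℝ) (K α : ℝ) : Prop :=
  P * P = P ∧ 1 ≤ K ∧ 0 < α ∧
  (∀ t₀ ∈ Ici (0 : ℝ), ∀ t, t₀ ≤ t →
    mnorm (X t * P * (X t₀)⁻¹) ≤ K * Real.exp (-α * (t - t₀))) ∧
  (∀ t ∈ Ici (0 : ℝ), ∀ t₀, t ≤ t₀ →
    mnorm (X t * (1 - P) * (X t₀)⁻¹) ≤ K * Real.exp (α * (t - t₀)))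

/-- The system `ẋ = A(t) x` admits an exponential dichotomy on `J` with projection `P`. -/
def HasExpDichotomy {n : Type*} [Fintype n] [DecidableEq n]
    (A : ℝ → Matrix n n ℝ) (P : Matrix n n ℝ) : Prop :=
  ∃ X : ℝ → Matrix n n ℝ, ∃ K α : ℝ,
    IsFundamentalSolution A X ∧ ExpDichotomyWith X P K α

/-- `(S, S')` is a Lyapunov transformation together with its derivative:
`S` is continuously differentiable with derivative `S'`, invertible for each `t`,
and `S`, `S⁻¹`, `S'` are uniformly bounded on `J`. -/
def IsLyapunovPair {n : Type*} [Fintype n] [DecidableEq n]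
    (S S' : ℝ → Matrix n n ℝ) : Prop :=
  (∀ t ∈ Ici (0 : ℝ), IsUnit (S t)) ∧
  (∀ t ∈ Ici (0 : ℝ), ∀ i j,
    HasDerivWithinAt (fun s => S s i j) (S' t i j) (Ici (0 : ℝ)) t) ∧
  ContinuousOnJ S' ∧
  UnifBdd S ∧ UnifBdd (fun t => (S t)⁻¹) ∧ UnifBdd S'


/-!
Take fundamental matrices `X₁`, `X₂` of the diagonal blocks and look for one of the full system of
the form `[[X₁, Y], [0, X₂]]`, which requires `Y' = B₁₁ Y + B₁₂ X₂`. Variation of constants gives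
the solution `Y t = -X₁ t * ∫ s in Ioi t, (X₁ s)⁻¹ * B₁₂ s * X₂ s`: since `P₁ = 0` and `P₂ = I`,
`X₁ t (X₁ s)⁻¹` and `X₂ s (X₂ t₀)⁻¹` both decay like `exp (-α s)` as `s → ∞`, so the integral
converges and `‖Y t (X₂ t₀)⁻¹‖ ≤ K² ‖B₁₂‖∞ / (2α) · exp (-α (t - t₀))`. Computing
`X t P (X t₀)⁻¹` and `X t (1 - P) (X t₀)⁻¹` block by block then gives both dichotomy estimates.
-/

open scoped Matrix.Norms.L2Operator
open MeasureTheory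

theorem mnorm_eq_norm {m n : Type*} [Fintype m] [Fintype n] [DecidableEq n] (M : Matrix m n ℝ) :
    mnorm M = ‖M‖ := rfl

namespace Matrix

variable {m m₁ m₂ n n₁ n₂ : Type*} [Fintype m] [Fintype m₁] [Fintype m₂] [Fintype n] [Fintype n₁]
  [Fintype n₂] [DecidableEq n]

theorem l2_opNorm_eq_of_conjTranspose_mul_self_eq {A : Matrix m n ℝ} {B : Matrix m₁ n ℝ}
    (h : Aᴴ * A = Bᴴ * B) : ‖A‖ = ‖B‖ := by
  have hA := l2_opNorm_conjTranspose_mul_self A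
  rw [h, l2_opNorm_conjTranspose_mul_self] at hA
  exact (mul_self_inj (norm_nonneg A) (norm_nonneg B)).1 hA.symm

theorem l2_opNorm_fromRows_zero (A : Matrix m₁ n ℝ) : ‖fromRows A (0 : Matrix m₂ n ℝ)‖ = ‖A‖ :=
  l2_opNorm_eq_of_conjTranspose_mul_self_eq <| by
    rw [conjTranspose_fromRows_eq_fromCols_conjTranspose, fromCols_mul_fromRows, conjTranspose_zero,
      Matrix.zero_mul, add_zero]

theorem l2_opNorm_zero_fromRows (A : Matrix m₂ n ℝ) : ‖fromRows (0 : Matrix m₁ n ℝ) A‖ = ‖A‖ :=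
  l2_opNorm_eq_of_conjTranspose_mul_self_eq <| by
    rw [conjTranspose_fromRows_eq_fromCols_conjTranspose, fromCols_mul_fromRows, conjTranspose_zero,
      Matrix.zero_mul, zero_add]

theorem l2_opNorm_fromRows_le (A₁ : Matrix m₁ n ℝ) (A₂ : Matrix m₂ n ℝ) :
    ‖fromRows A₁ A₂‖ ≤ ‖A₁‖ + ‖A₂‖ := by
  have h : fromRows A₁ A₂ = fromRows A₁ 0 + fromRows 0 A₂ := by
    ext (i | i) j <;> simp
  rw [h, ← l2_opNorm_fromRows_zero A₁ (m₂ := m₂), ← l2_opNorm_zero_fromRows A₂ (m₁ := m₁)]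
  exact norm_add_le _ _

variable [DecidableEq m] [DecidableEq m₁] [DecidableEq m₂] [DecidableEq n₁] [DecidableEq n₂]

theorem l2_opNorm_fromCols_le (B₁ : Matrix m n₁ ℝ) (B₂ : Matrix m n₂ ℝ) :
    ‖fromCols B₁ B₂‖ ≤ ‖B₁‖ + ‖B₂‖ := by
  rw [← l2_opNorm_conjTranspose, conjTranspose_fromCols_eq_fromRows_conjTranspose,
    ← l2_opNorm_conjTranspose B₁, ← l2_opNorm_conjTranspose B₂]
  exact l2_opNorm_fromRows_le _ _

theorem l2_opNorm_fromBlocks_le (A : Matrix m₁ n₁ ℝ) (B : Matrix m₁ n₂ ℝ) (C : Matrix m₂ n₁ ℝ)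
    (D : Matrix m₂ n₂ ℝ) : ‖fromBlocks A B C D‖ ≤ ‖A‖ + ‖B‖ + ‖C‖ + ‖D‖ := by
  rw [← fromRows_fromCols_eq_fromBlocks]
  calc _ ≤ ‖fromCols A B‖ + ‖fromCols C D‖ := l2_opNorm_fromRows_le _ _
    _ ≤ ‖A‖ + ‖B‖ + (‖C‖ + ‖D‖) :=
        add_le_add (l2_opNorm_fromCols_le A B) (l2_opNorm_fromCols_le C D)
    _ = _ := by ring

end Matrix

section Calculus

variable {E : Type*} [NormedAddCommGroup E] [NormedSpace ℝ E] [CompleteSpace E]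

theorem ContinuousOn.hasDerivWithinAt_intervalIntegral_Ici {G : ℝ → E} {a t : ℝ}
    (hG : ContinuousOn G (Ici a)) (ht : a ≤ t) :
    HasDerivWithinAt (fun u => ∫ s in a..u, G s) (G t) (Ici a) t := by
  have hint : IntervalIntegrable G volume a t :=
    (hG.mono (by rw [uIcc_of_le ht]; exact Icc_subset_Ici_self)).intervalIntegrable
  rcases ht.eq_or_lt with rfl | ht
  · exact intervalIntegral.integral_hasDerivWithinAt_right hint
      ((hG.mono Ioi_subset_Ici_self).stronglyMeasurableAtFilter_nhdsWithin measurableSet_Ioi a)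
      ((hG a self_mem_Ici).mono Ioi_subset_Ici_self)
  · refine (intervalIntegral.integral_hasDerivAt_right hint
      ((hG.mono Ioi_subset_Ici_self).stronglyMeasurableAtFilter isOpen_Ioi t ht)
      ((hG t ht.le).continuousAt (Ici_mem_nhds ht))).hasDerivWithinAt

theorem ContinuousOn.hasDerivWithinAt_setIntegral_Ioi {G : ℝ → E} {a t : ℝ}
    (hG : ContinuousOn G (Ici a)) (hi : IntegrableOn G (Ioi a)) (ht : a ≤ t) :
    HasDerivWithinAt (fun u => ∫ s in Ioi u, G s) (-G t) (Ici a) t := by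
  have htail : EqOn (fun u => ∫ s in Ioi u, G s) (fun u => (∫ s in Ioi a, G s) - ∫ s in a..u, G s)
      (Ici a) := fun u hu => by
    dsimp only
    rw [← intervalIntegral.integral_Ioi_sub_Ioi hi hu, sub_sub_cancel]
  simpa using ((hG.hasDerivWithinAt_intervalIntegral_Ici ht).const_sub _).congr_of_mem htail ht

end Calculus

section MatrixCalculus

variable {l m n o : Type*}

theorem HasDerivWithinAt.matrix_apply [Fintype m] [Fintype n] [DecidableEq n]
    {F : ℝ → Matrix m n ℝ} {F' : Matrix m n ℝ} {s : Set ℝ} {t : ℝ}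
    (h : HasDerivWithinAt F F' s t) (i : m) (j : n) :
    HasDerivWithinAt (fun u => F u i j) (F' i j) s t :=
  (LinearMap.toContinuousLinearMap
    (Matrix.entryLinearMap ℝ ℝ i j)).hasFDerivAt.comp_hasDerivWithinAt t h

theorem hasDerivWithinAt_matrix_mul_apply [Fintype m] {A : ℝ → Matrix l m ℝ} {B : ℝ → Matrix m n ℝ}
    {A' : Matrix l m ℝ} {B' : Matrix m n ℝ} {s : Set ℝ} {t : ℝ}
    (hA : ∀ i j, HasDerivWithinAt (fun u => A u i j) (A' i j) s t)
    (hB : ∀ i j, HasDerivWithinAt (fun u => B u i j) (B' i j) s t) (i : l) (j : n) :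
    HasDerivWithinAt (fun u => (A u * B u) i j) ((A' * B t + A t * B') i j) s t := by
  simp only [Matrix.mul_apply, Matrix.add_apply, ← Finset.sum_add_distrib]
  exact HasDerivWithinAt.fun_sum fun k _ => (hA i k).mul (hB k j)

theorem Matrix.integral_mul_mul [Fintype l] [Fintype m] [Fintype n] [Fintype o] [DecidableEq n]
    [DecidableEq o] {α : Type*} [MeasurableSpace α] {μ : Measure α}
    (A : Matrix l m ℝ) (B : Matrix n o ℝ) {f : α → Matrix m n ℝ} (hf : Integrable f μ) :
    ∫ x, A * f x * B ∂μ = A * (∫ x, f x ∂μ) * B :=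
  (LinearMap.toContinuousLinearMap
    ((mulRightLinearMap l ℝ B).comp (mulLeftLinearMap n ℝ A))).integral_comp_comm hf

theorem ContinuousOn.matrix_mul [Fintype m] {A : ℝ → Matrix l m ℝ} {B : ℝ → Matrix m n ℝ}
    {s : Set ℝ} (hA : ContinuousOn A s) (hB : ContinuousOn B s) :
    ContinuousOn (fun t => A t * B t) s :=
  (continuous_fst.matrix_mul continuous_snd).comp_continuousOn (hA.prodMk hB)

end MatrixCalculus

section Dichotomy

variable {m n : Type*} [Fintype m] [Fintype n] [DecidableEq m] [DecidableEq n]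

theorem ExpDichotomyWith.mono {X : ℝ → Matrix n n ℝ} {P : Matrix n n ℝ} {K α K' α' : ℝ}
    (h : ExpDichotomyWith X P K α) (hK : K ≤ K') (hα' : 0 < α') (hα : α' ≤ α) :
    ExpDichotomyWith X P K' α' := by
  obtain ⟨hP, hK₁, -, hfwd, hbwd⟩ := h
  refine ⟨hP, hK₁.trans hK, hα', fun t₀ ht₀ t ht => ?_, fun t ht t₀ ht₀ => ?_⟩
  · exact (hfwd t₀ ht₀ t ht).trans (mul_le_mul hK (Real.exp_le_exp.2 (by nlinarith))
      (Real.exp_pos _).le (by linarith))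
  · exact (hbwd t ht t₀ ht₀).trans (mul_le_mul hK (Real.exp_le_exp.2 (by nlinarith))
      (Real.exp_pos _).le (by linarith))

theorem ExpDichotomyWith.norm_mul_inv_le_of_proj_zero {X : ℝ → Matrix n n ℝ} {K α : ℝ}
    (h : ExpDichotomyWith X 0 K α) {t t₀ : ℝ} (ht : 0 ≤ t) (htt₀ : t ≤ t₀) :
    ‖X t * (X t₀)⁻¹‖ ≤ K * Real.exp (α * (t - t₀)) := by
  simpa [mnorm_eq_norm] using h.2.2.2.2 t ht t₀ htt₀

theorem ExpDichotomyWith.norm_mul_inv_le_of_proj_one {X : ℝ → Matrix n n ℝ} {K α : ℝ}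
    (h : ExpDichotomyWith X 1 K α) {t t₀ : ℝ} (ht₀ : 0 ≤ t₀) (ht₀t : t₀ ≤ t) :
    ‖X t * (X t₀)⁻¹‖ ≤ K * Real.exp (-α * (t - t₀)) := by
  simpa [mnorm_eq_norm] using h.2.2.2.1 t₀ ht₀ t ht₀t

theorem fromBlocks_mul_diag_zero_one_mul_inv (X₁ X₁' : Matrix m m ℝ) (Y Y' : Matrix m n ℝ)
    (X₂ X₂' : Matrix n n ℝ) (h₁ : IsUnit X₁') (h₂ : IsUnit X₂') :
    fromBlocks X₁ Y 0 X₂ * fromBlocks 0 0 0 1 * (fromBlocks X₁' Y' 0 X₂')⁻¹ =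
      fromBlocks 0 (Y * X₂'⁻¹) 0 (X₂ * X₂'⁻¹) := by
  rw [inv_fromBlocks_zero₂₁_of_isUnit_iff _ _ _ (iff_of_true h₁ h₂), fromBlocks_multiply,
    fromBlocks_multiply]
  simp

theorem fromBlocks_mul_one_sub_diag_zero_one_mul_inv (X₁ X₁' : Matrix m m ℝ) (Y Y' : Matrix m n ℝ)
    (X₂ X₂' : Matrix n n ℝ) (h₁ : IsUnit X₁') (h₂ : IsUnit X₂') :
    fromBlocks X₁ Y 0 X₂ * (1 - fromBlocks 0 0 0 1) * (fromBlocks X₁' Y' 0 X₂')⁻¹ =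
      fromBlocks (X₁ * X₁'⁻¹) (-(X₁ * X₁'⁻¹ * (Y' * X₂'⁻¹))) 0 0 := by
  rw [inv_fromBlocks_zero₂₁_of_isUnit_iff _ _ _ (iff_of_true h₁ h₂), ← fromBlocks_one,
    sub_eq_add_neg, fromBlocks_neg, fromBlocks_add, fromBlocks_multiply, fromBlocks_multiply]
  simp [Matrix.mul_assoc]

theorem ExpDichotomyWith.fromBlocks {X₁ : ℝ → Matrix m m ℝ} {X₂ : ℝ → Matrix n n ℝ}
    {Y : ℝ → Matrix m n ℝ} {K α C : ℝ} (h₁ : ExpDichotomyWith X₁ 0 K α)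
    (h₂ : ExpDichotomyWith X₂ 1 K α) (hu₁ : ∀ t ∈ Ici (0 : ℝ), IsUnit (X₁ t))
    (hu₂ : ∀ t ∈ Ici (0 : ℝ), IsUnit (X₂ t))
    (hY : ∀ t₀ ∈ Ici (0 : ℝ), ∀ t, t₀ ≤ t → ‖Y t * (X₂ t₀)⁻¹‖ ≤ C * Real.exp (-α * (t - t₀))) :
    ExpDichotomyWith (fun t => fromBlocks (X₁ t) (Y t) 0 (X₂ t)) (fromBlocks 0 0 0 1)
      (K + C + K * C) α := by
  have hC : 0 ≤ C := by simpa using (norm_nonneg _).trans (hY 0 self_mem_Ici 0 le_rfl)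
  have hK : 1 ≤ K := h₁.2.1
  refine ⟨by simp [fromBlocks_multiply], by nlinarith, h₁.2.2.1, fun t₀ ht₀ t ht₀t => ?_,
    fun t ht t₀ htt₀ => ?_⟩
  · rw [mnorm_eq_norm, fromBlocks_mul_diag_zero_one_mul_inv _ _ _ _ _ _ (hu₁ t₀ ht₀) (hu₂ t₀ ht₀)]
    refine (l2_opNorm_fromBlocks_le _ _ _ _).trans ?_
    have h₂' := h₂.norm_mul_inv_le_of_proj_one ht₀ ht₀t
    have hY' := hY t₀ ht₀ t ht₀t
    simp only [norm_zero]
    nlinarith [mul_nonneg (mul_nonneg (zero_le_one.trans hK) hC) (Real.exp_pos (-α * (t - t₀))).le]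
  · have ht₀ : (0 : ℝ) ≤ t₀ := le_trans ht htt₀
    rw [mnorm_eq_norm,
      fromBlocks_mul_one_sub_diag_zero_one_mul_inv _ _ _ _ _ _ (hu₁ t₀ ht₀) (hu₂ t₀ ht₀)]
    refine (l2_opNorm_fromBlocks_le _ _ _ _).trans ?_
    have h₁' := h₁.norm_mul_inv_le_of_proj_zero ht htt₀
    have hY' : ‖Y t₀ * (X₂ t₀)⁻¹‖ ≤ C := by simpa using hY t₀ ht₀ t₀ le_rfl
    have hcorner := (l2_opNorm_mul _ _).trans (mul_le_mul h₁' hY' (norm_nonneg _) (by positivity))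
    simp only [norm_zero, norm_neg]
    nlinarith [mul_nonneg hC (Real.exp_pos (α * (t - t₀))).le]

end Dichotomy

section Fundamental

variable {m n : Type*} [Fintype m] [Fintype n] [DecidableEq m] [DecidableEq n]

theorem IsFundamentalSolution.continuousOn {A X : ℝ → Matrix n n ℝ}
    (hX : IsFundamentalSolution A X) : ContinuousOn X (Ici 0) :=
  continuousOn_pi.2 fun i => continuousOn_pi.2 fun j t ht => (hX.2 t ht i j).continuousWithinAt

theorem IsFundamentalSolution.continuousOn_inv {A X : ℝ → Matrix n n ℝ}
    (hX : IsFundamentalSolution A X) : ContinuousOn (fun t => (X t)⁻¹) (Ici 0) := by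
  intro t ht
  have hdet : (X t).det ≠ 0 := ((isUnit_iff_isUnit_det _).1 (hX.1 t ht)).ne_zero
  refine (continuousAt_matrix_inv _ ?_).comp_continuousWithinAt (hX.continuousOn t ht)
  rw [Ring.inverse_eq_inv']
  exact continuousAt_inv₀ hdet

theorem IsFundamentalSolution.fromBlocks {B₁₁ X₁ : ℝ → Matrix m m ℝ} {B₁₂ Y : ℝ → Matrix m n ℝ}
    {B₂₂ X₂ : ℝ → Matrix n n ℝ} (h₁ : IsFundamentalSolution B₁₁ X₁)
    (h₂ : IsFundamentalSolution B₂₂ X₂)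
    (hY : ∀ t ∈ Ici (0 : ℝ), ∀ i j,
      HasDerivWithinAt (fun s => Y s i j) ((B₁₁ t * Y t + B₁₂ t * X₂ t) i j) (Ici 0) t) :
    IsFundamentalSolution (fun t => fromBlocks (B₁₁ t) (B₁₂ t) 0 (B₂₂ t))
      (fun t => fromBlocks (X₁ t) (Y t) 0 (X₂ t)) := by
  refine ⟨fun t ht => isUnit_fromBlocks_zero₂₁.2 ⟨h₁.1 t ht, h₂.1 t ht⟩, fun t ht i j => ?_⟩
  rw [fromBlocks_multiply]
  rcases i with i | i <;> rcases j with j | j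
  · simpa using h₁.2 t ht i j
  · simpa using hY t ht i j
  · simpa using hasDerivWithinAt_const t (Ici 0) (0 : ℝ)
  · simpa using h₂.2 t ht i j

end Fundamental

section OffDiagonal

variable {m n : Type*} [Fintype m] [Fintype n] [DecidableEq m] [DecidableEq n]

def offDiagIntegrand (X₁ : ℝ → Matrix m m ℝ) (B₁₂ : ℝ → Matrix m n ℝ) (X₂ : ℝ → Matrix n n ℝ)
    (s : ℝ) : Matrix m n ℝ :=
  (X₁ s)⁻¹ * B₁₂ s * X₂ s

def offDiagBlock (X₁ : ℝ → Matrix m m ℝ) (B₁₂ : ℝ → Matrix m n ℝ) (X₂ : ℝ → Matrix n n ℝ)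
    (t : ℝ) : Matrix m n ℝ :=
  -(X₁ t * ∫ s in Ioi t, offDiagIntegrand X₁ B₁₂ X₂ s)

variable {B₁₁ X₁ : ℝ → Matrix m m ℝ} {B₁₂ : ℝ → Matrix m n ℝ} {B₂₂ X₂ : ℝ → Matrix n n ℝ}
  {K α a : ℝ}

theorem norm_mul_offDiagIntegrand_mul_le (h₁ : ExpDichotomyWith X₁ 0 K α)
    (h₂ : ExpDichotomyWith X₂ 1 K α) (hB : ∀ t ∈ Ici (0 : ℝ), ‖B₁₂ t‖ ≤ a) {t t₀ s : ℝ}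
    (ht : 0 ≤ t) (ht₀ : 0 ≤ t₀) (hts : t ≤ s) (ht₀s : t₀ ≤ s) :
    ‖X₁ t * offDiagIntegrand X₁ B₁₂ X₂ s * (X₂ t₀)⁻¹‖ ≤
      K * K * a * Real.exp (α * (t + t₀)) * Real.exp (-(2 * α) * s) := by
  have hK : 0 ≤ K := zero_le_one.trans h₁.2.1
  have hB' := hB s (ht.trans hts)
  have h₁' := h₁.norm_mul_inv_le_of_proj_zero ht hts
  have h₂' := h₂.norm_mul_inv_le_of_proj_one ht₀ ht₀s
  calc ‖X₁ t * offDiagIntegrand X₁ B₁₂ X₂ s * (X₂ t₀)⁻¹‖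
      = ‖X₁ t * (X₁ s)⁻¹ * (B₁₂ s * (X₂ s * (X₂ t₀)⁻¹))‖ := by
        simp only [offDiagIntegrand, Matrix.mul_assoc]
    _ ≤ ‖X₁ t * (X₁ s)⁻¹‖ * (‖B₁₂ s‖ * ‖X₂ s * (X₂ t₀)⁻¹‖) :=
        (l2_opNorm_mul _ _).trans
          (mul_le_mul_of_nonneg_left (l2_opNorm_mul _ _) (norm_nonneg _))
    _ ≤ K * Real.exp (α * (t - s)) * (a * (K * Real.exp (-α * (s - t₀)))) := by
        gcongr
        exact (norm_nonneg _).trans hB'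
    _ = K * K * a * Real.exp (α * (t + t₀)) * Real.exp (-(2 * α) * s) := by
        rw [mul_assoc (K * K * a), ← Real.exp_add,
          show α * (t + t₀) + -(2 * α) * s = α * (t - s) + -α * (s - t₀) by ring, Real.exp_add]
        ring

theorem continuousOn_offDiagIntegrand (hX₁ : IsFundamentalSolution B₁₁ X₁)
    (hX₂ : IsFundamentalSolution B₂₂ X₂) (hBc : ContinuousOnJ B₁₂) :
    ContinuousOn (offDiagIntegrand X₁ B₁₂ X₂) (Ici 0) :=
  (hX₁.continuousOn_inv.matrix_mul
    (continuousOn_pi.2 fun i => continuousOn_pi.2 (hBc i))).matrix_mul hX₂.continuousOn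

theorem integrableOn_offDiagIntegrand (hX₁ : IsFundamentalSolution B₁₁ X₁)
    (hX₂ : IsFundamentalSolution B₂₂ X₂) (h₁ : ExpDichotomyWith X₁ 0 K α)
    (h₂ : ExpDichotomyWith X₂ 1 K α) (hBc : ContinuousOnJ B₁₂)
    (hB : ∀ t ∈ Ici (0 : ℝ), ‖B₁₂ t‖ ≤ a) :
    IntegrableOn (offDiagIntegrand X₁ B₁₂ X₂) (Ioi 0) := by
  have hcont := continuousOn_offDiagIntegrand hX₁ hX₂ hBc
  have hu₁ := (isUnit_iff_isUnit_det _).1 (hX₁.1 0 self_mem_Ici)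
  have hu₂ := (isUnit_iff_isUnit_det _).1 (hX₂.1 0 self_mem_Ici)
  set C := ‖(X₁ 0)⁻¹‖ * (K * K * a) * ‖X₂ 0‖
  have hbound :
      ∀ s ∈ Ioi (0 : ℝ), ‖offDiagIntegrand X₁ B₁₂ X₂ s‖ ≤ C * Real.exp (-(2 * α) * s) := by
    intro s hs
    calc ‖offDiagIntegrand X₁ B₁₂ X₂ s‖
        = ‖(X₁ 0)⁻¹ * (X₁ 0 * offDiagIntegrand X₁ B₁₂ X₂ s * (X₂ 0)⁻¹) * X₂ 0‖ := by
          simp only [Matrix.mul_assoc, nonsing_inv_mul _ hu₂, Matrix.mul_one,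
            nonsing_inv_mul_cancel_left _ _ hu₁]
      _ ≤ ‖(X₁ 0)⁻¹‖ * ‖X₁ 0 * offDiagIntegrand X₁ B₁₂ X₂ s * (X₂ 0)⁻¹‖ * ‖X₂ 0‖ :=
          (l2_opNorm_mul _ _).trans
            (mul_le_mul_of_nonneg_right (l2_opNorm_mul _ _) (norm_nonneg _))
      _ ≤ ‖(X₁ 0)⁻¹‖ * (K * K * a * Real.exp (α * (0 + 0)) * Real.exp (-(2 * α) * s)) *
            ‖X₂ 0‖ := by
          gcongr
          exact norm_mul_offDiagIntegrand_mul_le h₁ h₂ hB le_rfl le_rfl (le_of_lt hs) (le_of_lt hs)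
      _ = C * Real.exp (-(2 * α) * s) := by simp [C]; ring
  have hα : -(2 * α) < 0 := by linarith [h₁.2.2.1]
  refine Integrable.mono' ((integrableOn_exp_mul_Ioi hα 0).const_mul C)
    ((hcont.mono Ioi_subset_Ici_self).aestronglyMeasurable measurableSet_Ioi) ?_
  exact (ae_restrict_iff' measurableSet_Ioi).2 (Filter.Eventually.of_forall hbound)

theorem hasDerivWithinAt_offDiagBlock_apply (hX₁ : IsFundamentalSolution B₁₁ X₁)
    (hX₂ : IsFundamentalSolution B₂₂ X₂) (h₁ : ExpDichotomyWith X₁ 0 K α)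
    (h₂ : ExpDichotomyWith X₂ 1 K α) (hBc : ContinuousOnJ B₁₂)
    (hB : ∀ t ∈ Ici (0 : ℝ), ‖B₁₂ t‖ ≤ a) :
    ∀ t ∈ Ici (0 : ℝ), ∀ i j, HasDerivWithinAt (fun s => offDiagBlock X₁ B₁₂ X₂ s i j)
      ((B₁₁ t * offDiagBlock X₁ B₁₂ X₂ t + B₁₂ t * X₂ t) i j) (Ici 0) t := by
  intro t ht i j
  have hV := ((continuousOn_offDiagIntegrand hX₁ hX₂ hBc).hasDerivWithinAt_setIntegral_Ioi
    (integrableOn_offDiagIntegrand hX₁ hX₂ h₁ h₂ hBc hB) ht).matrix_apply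
  have hu := (isUnit_iff_isUnit_det _).1 (hX₁.1 t ht)
  have hY' : B₁₁ t * offDiagBlock X₁ B₁₂ X₂ t + B₁₂ t * X₂ t =
      -(B₁₁ t * X₁ t * (∫ s in Ioi t, offDiagIntegrand X₁ B₁₂ X₂ s) +
        X₁ t * -offDiagIntegrand X₁ B₁₂ X₂ t) := by
    simp only [offDiagBlock, offDiagIntegrand, Matrix.mul_neg, neg_add, neg_neg, Matrix.mul_assoc,
      mul_nonsing_inv_cancel_left _ _ hu]
  rw [hY', Matrix.neg_apply]
  exact (hasDerivWithinAt_matrix_mul_apply (hX₁.2 t ht) hV i j).neg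

theorem norm_offDiagBlock_mul_inv_le (hX₁ : IsFundamentalSolution B₁₁ X₁)
    (hX₂ : IsFundamentalSolution B₂₂ X₂) (h₁ : ExpDichotomyWith X₁ 0 K α)
    (h₂ : ExpDichotomyWith X₂ 1 K α) (hBc : ContinuousOnJ B₁₂)
    (hB : ∀ t ∈ Ici (0 : ℝ), ‖B₁₂ t‖ ≤ a) :
    ∀ t₀ ∈ Ici (0 : ℝ), ∀ t, t₀ ≤ t →
      ‖offDiagBlock X₁ B₁₂ X₂ t * (X₂ t₀)⁻¹‖ ≤ K * K * a / (2 * α) * Real.exp (-α * (t - t₀)) := by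
  intro t₀ ht₀ t ht₀t
  have ht : (0 : ℝ) ≤ t := le_trans ht₀ ht₀t
  have hα : -(2 * α) < 0 := by linarith [h₁.2.2.1]
  have hint := (integrableOn_offDiagIntegrand hX₁ hX₂ h₁ h₂ hBc hB).mono_set (Ioi_subset_Ioi ht)
  rw [offDiagBlock, Matrix.neg_mul, norm_neg, ← Matrix.integral_mul_mul _ _ hint]
  calc ‖∫ s in Ioi t, X₁ t * offDiagIntegrand X₁ B₁₂ X₂ s * (X₂ t₀)⁻¹‖
      ≤ ∫ s in Ioi t, K * K * a * Real.exp (α * (t + t₀)) * Real.exp (-(2 * α) * s) := by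
        refine norm_integral_le_of_norm_le ((integrableOn_exp_mul_Ioi hα t).const_mul _) ?_
        refine (ae_restrict_iff' measurableSet_Ioi).2 (Filter.Eventually.of_forall fun s hs => ?_)
        exact norm_mul_offDiagIntegrand_mul_le h₁ h₂ hB ht ht₀ (le_of_lt hs)
          (ht₀t.trans (le_of_lt hs))
    _ = K * K * a / (2 * α) * (Real.exp (α * (t + t₀)) * Real.exp (-(2 * α) * t)) := by
        rw [integral_const_mul, integral_exp_mul_Ioi hα]
        field_simp
    _ = K * K * a / (2 * α) * Real.exp (-α * (t - t₀)) := by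
        rw [← Real.exp_add]
        ring_nf

end OffDiagonal

theorem expDichotomy_block_triangular_general
    (n k : ℕ)
    (B11 : ℝ → Matrix (Fin (n - k)) (Fin (n - k)) ℝ)
    (B12 : ℝ → Matrix (Fin (n - k)) (Fin k) ℝ)
    (B22 : ℝ → Matrix (Fin k) (Fin k) ℝ)
    (hB12 : ContinuousOnJ B12 ∧ UnifBdd B12)
    (hED1 : HasExpDichotomy B11 (0 : Matrix (Fin (n - k)) (Fin (n - k)) ℝ))
    (hED2 : HasExpDichotomy B22 (1 : Matrix (Fin k) (Fin k) ℝ)) :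
    HasExpDichotomy (fun t => Matrix.fromBlocks (B11 t) (B12 t) 0 (B22 t))
      (Matrix.fromBlocks 0 0 0 (1 : Matrix (Fin k) (Fin k) ℝ)) := by
  obtain ⟨X₁, K₁, α₁, hX₁, hD₁⟩ := hED1
  obtain ⟨X₂, K₂, α₂, hX₂, hD₂⟩ := hED2
  obtain ⟨a, ha⟩ := hB12.2
  have hα : 0 < min α₁ α₂ := lt_min hD₁.2.2.1 hD₂.2.2.1
  have h₁ := hD₁.mono (le_max_left K₁ K₂) hα (min_le_left _ _)
  have h₂ := hD₂.mono (le_max_right K₁ K₂) hα (min_le_right _ _)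
  exact ⟨_, _, _, hX₁.fromBlocks hX₂ (hasDerivWithinAt_offDiagBlock_apply hX₁ hX₂ h₁ h₂ hB12.1 ha),
    h₁.fromBlocks h₂ hX₁.1 hX₂.1 (norm_offDiagBlock_mul_inv_le hX₁ hX₂ h₁ h₂ hB12.1 ha)⟩

/-- Exponential dichotomy of block triangular systems (Proposition 3, first part):
if the diagonal blocks admit exponential dichotomies with projections `0` and `I`,
the full block upper triangular system admits an exponential dichotomy with
projection `diag(0, I)`. -/
theorem expDichotomy_block_triangular
    (n k : ℕ) (hn : 2 ≤ n) (hk1 : 1 ≤ k) (hk2 : k ≤ n - 1)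
    (B11 : ℝ → Matrix (Fin (n - k)) (Fin (n - k)) ℝ)
    (B12 : ℝ → Matrix (Fin (n - k)) (Fin k) ℝ)
    (B22 : ℝ → Matrix (Fin k) (Fin k) ℝ)
    (hB11 : ContinuousOnJ B11 ∧ UnifBdd B11)
    (hB12 : ContinuousOnJ B12 ∧ UnifBdd B12)
    (hB22 : ContinuousOnJ B22 ∧ UnifBdd B22)
    (hED1 : HasExpDichotomy B11 (0 : Matrix (Fin (n - k)) (Fin (n - k)) ℝ))
    (hED2 : HasExpDichotomy B22 (1 : Matrix (Fin k) (Fin k) ℝ)) :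
    HasExpDichotomy (fun t => Matrix.fromBlocks (B11 t) (B12 t) 0 (B22 t))
      (Matrix.fromBlocks 0 0 0 (1 : Matrix (Fin k) (Fin k) ℝ)) :=
  expDichotomy_block_triangular_general n k B11 B12 B22 hB12 hED1 hED2
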